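/- Let H1, H2, H3 be complex Hilbert spaces, T : H1 → H2 and S : H2 → H3 closed densely defined operators with S ∘ T = 0. Suppose v ∈ ker S and there is a constant C ≥ 0 such that for every f ∈ Dom S ∩ Dom T* one has |⟨f, v⟩|² ≤ C(‖Sf‖² + ‖T*f‖²), and suppose every f ∈ Dom T* decomposes orthogonally as f₁ + f₂ with f₁ ∈ ker S ∩ Dom T* and f₂ ∈ (ker S)^⊥ ⊆ ker T*. Then there exists u ∈ H1 with Tu = v and ‖u‖² ≤ C. -/

import Mathlib

/-!
Hörmander's argument. Once the a priori estimate holds on all of `Dom T*`, the functional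
`T* f ↦ ⟪v, f⟫` is well defined and bounded by `√C` on the range of `T*`; Hahn–Banach and the
Riesz representation give `u` with `‖u‖ ≤ √C` and `⟪u, T* f⟫ = ⟪v, f⟫` for all `f ∈ Dom T*`.
This says `u ∈ Dom T**` with `T** u = v`, and `T** = T` because `T` is closed.
-/

open scoped InnerProductSpace

section RangeFunctional

variable {𝕜 E H : Type*} [RCLike 𝕜] [AddCommGroup E] [Module 𝕜 E]
  [NormedAddCommGroup H] [InnerProductSpace 𝕜 H] [CompleteSpace H]

theorem exists_norm_le_and_eq_inner_of_norm_le (L : E →ₗ[𝕜] H) (ψ : E →ₗ[𝕜] 𝕜) {M : ℝ}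
    (hM : 0 ≤ M) (hψ : ∀ x, ‖ψ x‖ ≤ M * ‖L x‖) :
    ∃ u : H, ‖u‖ ≤ M ∧ ∀ x, ψ x = ⟪u, L x⟫_𝕜 := by
  have hker : LinearMap.ker L ≤ LinearMap.ker ψ := fun x hx =>
    norm_le_zero_iff.mp <| by simpa [LinearMap.mem_ker.mp hx] using hψ x
  set φ : LinearMap.range L →ₗ[𝕜] 𝕜 :=
    (LinearMap.ker L).liftQ ψ hker ∘ₗ L.quotKerEquivRange.symm.toLinearMap
  have hφ : ∀ x, φ ⟨L x, LinearMap.mem_range_self L x⟩ = ψ x := fun x => by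
    simp [φ, LinearMap.quotKerEquivRange_symm_apply_image]
  have hφ_le : ∀ y : LinearMap.range L, ‖φ y‖ ≤ M * ‖(y : H)‖ := by
    rintro ⟨_, x, rfl⟩
    rw [hφ]
    exact hψ x
  obtain ⟨g, hg, hg_norm⟩ := exists_extension_norm_eq _ (φ.mkContinuous M hφ_le)
  refine ⟨(InnerProductSpace.toDual 𝕜 H).symm g, ?_, fun x => ?_⟩
  · rw [LinearIsometryEquiv.norm_map, hg_norm]
    exact LinearMap.mkContinuous_norm_le φ hM hφ_le
  · rw [InnerProductSpace.toDual_symm_apply, ← hφ]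
    exact (hg ⟨L x, LinearMap.mem_range_self L x⟩).symm

end RangeFunctional

namespace LinearPMap

variable {𝕜 E F : Type*} [RCLike 𝕜] [NormedAddCommGroup E] [InnerProductSpace 𝕜 E]
  [CompleteSpace E] [NormedAddCommGroup F] [InnerProductSpace 𝕜 F] {T : E →ₗ.[𝕜] F}

theorem mem_adjoint_graph_of_inner_add_inner_eq_zero (hT : Dense (T.domain : Set E))
    {x : E} {y : F} (h : ∀ a : T.domain, ⟪x, (a : E)⟫_𝕜 + ⟪y, T a⟫_𝕜 = 0) :
    (y, -x) ∈ T†.graph := by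
  have hy : ∀ a : T.domain, ⟪-x, (a : E)⟫_𝕜 = ⟪y, T a⟫_𝕜 := fun a => by
    rw [inner_neg_left, neg_eq_iff_add_eq_zero, h]
  have hy_mem : y ∈ T†.domain := mem_adjoint_domain_of_exists y ⟨-x, hy⟩
  exact (mem_graph_iff _).mpr ⟨⟨y, hy_mem⟩, rfl, adjoint_apply_eq hT _ hy⟩

/-- `T** ⊆ T` for a closed densely defined `T`. -/
theorem mem_graph_of_inner_adjoint_eq [CompleteSpace F] (hT : Dense (T.domain : Set E))
    (hTc : T.IsClosed) {u : E} {v : F} (h : ∀ f : T†.domain, ⟪u, T† f⟫_𝕜 = ⟪v, (f : F)⟫_𝕜) :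
    (u, v) ∈ T.graph := by
  set K : Submodule 𝕜 (WithLp 2 (E × F)) :=
    T.graph.comap (WithLp.linearEquiv 2 𝕜 (E × F)).toLinearMap
  have hK : _root_.IsClosed (K : Set (WithLp 2 (E × F))) :=
    hTc.preimage (WithLp.prod_continuous_ofLp _ _ _)
  suffices WithLp.toLp 2 (u, v) ∈ Kᗮᗮ by
    rwa [K.orthogonal_orthogonal_eq_closure, hK.submodule_topologicalClosure_eq] at this
  rw [Submodule.mem_orthogonal']
  intro w hw
  have hw' : ∀ a : T.domain, ⟪w.fst, (a : E)⟫_𝕜 + ⟪w.snd, T a⟫_𝕜 = 0 := fun a =>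
    (K.mem_orthogonal' w).mp hw (WithLp.toLp 2 (a, T a)) (T.mem_graph a)
  obtain ⟨f, hf, hTf⟩ :=
    (mem_graph_iff _).mp (mem_adjoint_graph_of_inner_add_inner_eq_zero hT hw')
  have := h f
  rw [hTf, hf, inner_neg_right] at this
  change ⟪u, w.fst⟫_𝕜 + ⟪v, w.snd⟫_𝕜 = 0
  linear_combination -this

end LinearPMap

theorem L2_existence_step_general
    {H1 H2 H3 : Type*} [NormedAddCommGroup H1] [InnerProductSpace ℂ H1] [CompleteSpace H1]
    [NormedAddCommGroup H2] [InnerProductSpace ℂ H2] [CompleteSpace H2]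
    [NormedAddCommGroup H3] [InnerProductSpace ℂ H3]
    (T : H1 →ₗ.[ℂ] H2) (S : H2 →ₗ.[ℂ] H3)
    (hTdense : Dense (T.domain : Set H1))
    (hTclosed : IsClosed (T.graph : Set (H1 × H2)))
    (v : H2) (hv : v ∈ S.domain) (hv0 : S ⟨v, hv⟩ = 0)
    (C : ℝ) (hC : 0 ≤ C)
    (hest : ∀ f : H2, ∀ hfS : f ∈ S.domain, ∀ hfT : f ∈ T.adjoint.domain,
      ‖(inner ℂ f v : ℂ)‖ ^ 2 ≤ C * (‖S ⟨f, hfS⟩‖ ^ 2 + ‖T.adjoint ⟨f, hfT⟩‖ ^ 2))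
    (hdec : ∀ f : H2, f ∈ T.adjoint.domain → ∃ f₁ f₂ : H2, f = f₁ + f₂ ∧
      (∃ h₁ : f₁ ∈ S.domain, S ⟨f₁, h₁⟩ = 0) ∧ f₁ ∈ T.adjoint.domain ∧
      (∀ g : H2, ∀ hg : g ∈ S.domain, S ⟨g, hg⟩ = 0 → (inner ℂ f₂ g : ℂ) = 0) ∧
      (∃ h₂ : f₂ ∈ T.adjoint.domain, T.adjoint ⟨f₂, h₂⟩ = 0)) :
    ∃ u : T.domain, T u = v ∧ ‖(u : H1)‖ ^ 2 ≤ C := by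
  -- In `f = f₁ + f₂`, `f₂ ⊥ ker S ∋ v` and `T* f₂ = 0`, while `S f₁ = 0`.
  have hest' : ∀ f : T.adjoint.domain, ‖⟪v, (f : H2)⟫_ℂ‖ ≤ √C * ‖T.adjoint f‖ := by
    rintro ⟨f, hf⟩
    obtain ⟨f₁, f₂, rfl, ⟨h₁S, hSf₁⟩, h₁T, hf₂, h₂T, hTf₂⟩ := hdec f hf
    have hsplit : (⟨f₁ + f₂, hf⟩ : T.adjoint.domain) = ⟨f₁, h₁T⟩ + ⟨f₂, h₂T⟩ := rfl
    have hest₁ := hest f₁ h₁S h₁T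
    rw [hSf₁, norm_zero, zero_pow two_ne_zero, zero_add] at hest₁
    rw [norm_inner_symm, inner_add_left, hf₂ v hv hv0, add_zero, hsplit, LinearPMap.map_add, hTf₂,
      add_zero, ← Real.sqrt_sq (norm_nonneg (T.adjoint _)), ← Real.sqrt_mul hC]
    exact Real.le_sqrt_of_sq_le hest₁
  obtain ⟨u, hu_norm, hu⟩ := exists_norm_le_and_eq_inner_of_norm_le T.adjoint.toFun
    ((innerₛₗ ℂ v).comp T.adjoint.domain.subtype) (Real.sqrt_nonneg C) hest'
  obtain ⟨x, rfl, hTx⟩ := (LinearPMap.mem_graph_iff T).mp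
    (T.mem_graph_of_inner_adjoint_eq hTdense hTclosed (fun f => (hu f).symm))
  exact ⟨x, hTx, (Real.le_sqrt (norm_nonneg _) hC).mp hu_norm⟩

/-- Key functional-analytic step in the L²-existence theorem: given closed
densely defined `T : H1 → H2`, `S : H2 → H3` with `S ∘ T = 0`, `v ∈ ker S` satisfying the
a priori estimate `|⟨f, v⟩|² ≤ C(‖Sf‖² + ‖T*f‖²)` on `Dom S ∩ Dom T*`, and assuming every
`f ∈ Dom T*` splits orthogonally as `f₁ + f₂` with `f₁ ∈ ker S ∩ Dom T*` and
`f₂ ∈ (ker S)ᵖᵉʳᵖ ⊆ ker T*`, there is `u` with `T u = v` and `‖u‖² ≤ C`. -/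
theorem L2_existence_step
    {H1 H2 H3 : Type*} [NormedAddCommGroup H1] [InnerProductSpace ℂ H1] [CompleteSpace H1]
    [NormedAddCommGroup H2] [InnerProductSpace ℂ H2] [CompleteSpace H2]
    [NormedAddCommGroup H3] [InnerProductSpace ℂ H3] [CompleteSpace H3]
    (T : H1 →ₗ.[ℂ] H2) (S : H2 →ₗ.[ℂ] H3)
    (hTdense : Dense (T.domain : Set H1)) (hSdense : Dense (S.domain : Set H2))
    (hTclosed : IsClosed (T.graph : Set (H1 × H2)))
    (hSclosed : IsClosed (S.graph : Set (H2 × H3)))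
    (hST : ∀ x : T.domain, ∃ hx : T x ∈ S.domain, S ⟨T x, hx⟩ = 0)
    (v : H2) (hv : v ∈ S.domain) (hv0 : S ⟨v, hv⟩ = 0)
    (C : ℝ) (hC : 0 ≤ C)
    (hest : ∀ f : H2, ∀ hfS : f ∈ S.domain, ∀ hfT : f ∈ T.adjoint.domain,
      ‖(inner ℂ f v : ℂ)‖ ^ 2 ≤ C * (‖S ⟨f, hfS⟩‖ ^ 2 + ‖T.adjoint ⟨f, hfT⟩‖ ^ 2))
    (hdec : ∀ f : H2, f ∈ T.adjoint.domain → ∃ f₁ f₂ : H2, f = f₁ + f₂ ∧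
      (∃ h₁ : f₁ ∈ S.domain, S ⟨f₁, h₁⟩ = 0) ∧ f₁ ∈ T.adjoint.domain ∧
      (∀ g : H2, ∀ hg : g ∈ S.domain, S ⟨g, hg⟩ = 0 → (inner ℂ f₂ g : ℂ) = 0) ∧
      (∃ h₂ : f₂ ∈ T.adjoint.domain, T.adjoint ⟨f₂, h₂⟩ = 0)) :
    ∃ u : T.domain, T u = v ∧ ‖(u : H1)‖ ^ 2 ≤ C :=
  L2_existence_step_general T S hTdense hTclosed v hv hv0 C hC hest hdec
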